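/- arXiv:2401.12625 — 7 statements merged into one kernel-verified Lean document; each statement's English description precedes it below -/
import Mathlib

section
/- Strong LP duality for the protection function (instance of the Bertsimas–Sim dualization used in the proof of Theorem 1): the protection value α(a, Γ) equals the infimum over all dual-feasible pairs (ρ, σ) of Γ·ρ + ∑_{j ∈ J} σ_j, and this infimum is attained by some dual-feasible pair. -/
/-- The protection value `α(a, Γ)`: the maximum over all subsets `S ⊆ J` with
`|S| ≤ Γ` of `∑ j ∈ S, a j`. -/
noncomputable def protVal {J : Type*} [Fintype J] (Γ : ℕ) (a : J → ℝ) : ℝ :=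
  (Finset.univ.powerset.filter (fun S : Finset J => S.card ≤ Γ)).sup'
    ⟨∅, by simp⟩ (fun S => ∑ j ∈ S, a j)

/-- Strong LP duality for the protection function: `α(a, Γ)` is the least value of
`Γ·ρ + ∑ j, σ j` over all dual-feasible pairs `(ρ, σ)`; in particular the infimum
is attained. -/
theorem protVal_strong_duality {J : Type*} [Fintype J] [Nonempty J]
    (a : J → ℝ) (ha : ∀ j, 0 ≤ a j) (Γ : ℕ) (hΓ : Γ ≤ Fintype.card J) :
    IsLeast {t : ℝ | ∃ (ρ : ℝ) (σ : J → ℝ), 0 ≤ ρ ∧ (∀ j, 0 ≤ σ j) ∧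
        (∀ j, a j ≤ ρ + σ j) ∧ t = (Γ : ℝ) * ρ + ∑ j, σ j}
      (protVal Γ a) := by
  classical
  set T := (Finset.univ.powerset.filter (fun S : Finset J => S.card ≤ Γ)) with hT
  have hTne : T.Nonempty := ⟨∅, by simp [hT]⟩
  have hmemT : ∀ S : Finset J, S.card ≤ Γ → S ∈ T := by
    intro S hS; simp [hT, hS]
  have hle : ∀ S : Finset J, S.card ≤ Γ → (∑ j ∈ S, a j) ≤ protVal Γ a := by
    intro S hS
    exact Finset.le_sup' (f := fun S => ∑ j ∈ S, a j) (hmemT S hS)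
  constructor
  · -- membership: the infimum is attained
    rcases Nat.eq_zero_or_pos Γ with hΓ0 | hΓpos
    · subst hΓ0
      have hα : protVal 0 a = 0 := by
        apply le_antisymm
        · apply Finset.sup'_le
          intro S hS
          simp only [hT, Finset.mem_filter, Nat.le_zero, Finset.card_eq_zero] at hS
          simp [hS.2]
        · simpa using hle ∅ (by simp)
      refine ⟨Finset.univ.sup' Finset.univ_nonempty a, 0, ?_, fun j => le_refl 0, ?_, ?_⟩
      · obtain ⟨j⟩ := ‹Nonempty J›
        exact le_trans (ha j) (Finset.le_sup' a (Finset.mem_univ j))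
      · intro j
        simpa using (⟨j, le_rfl⟩ : ∃ b, a j ≤ a b)
      · simp [hα]
    · -- Γ ≥ 1
      obtain ⟨S₀, hS₀T, hS₀⟩ := Finset.exists_mem_eq_sup' hTne (fun S => ∑ j ∈ S, a j)
      simp only [hT, Finset.mem_filter] at hS₀T
      obtain ⟨Sst, hsub, hsubuniv, hcard⟩ :=
        Finset.exists_subsuperset_card_eq (Finset.subset_univ S₀) hS₀T.2
          (by simpa using hΓ)
      have hα : protVal Γ a = ∑ j ∈ S₀, a j := hS₀
      have hsum : (∑ j ∈ Sst, a j) = protVal Γ a := by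
        apply le_antisymm (hle Sst hcard.le)
        rw [hα]
        exact Finset.sum_le_sum_of_subset_of_nonneg hsub (fun j _ _ => ha j)
      have hne : Sst.Nonempty := Finset.card_pos.mp (by omega)
      set ρ := Sst.inf' hne a with hρ
      obtain ⟨m, hmS, hm⟩ := Finset.exists_mem_eq_inf' hne a
      have hρ0 : 0 ≤ ρ := by rw [hρ, hm]; exact ha m
      have hρle : ∀ j ∈ Sst, ρ ≤ a j := fun j hj => Finset.inf'_le a hj
      -- key exchange argument
      have hout : ∀ j, j ∉ Sst → a j ≤ ρ := by
        intro j hj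
        by_contra h
        push_neg at h
        have hsum' : (∑ k ∈ insert j (Sst.erase m), a k) ≤ protVal Γ a := by
          apply hle
          rw [Finset.card_insert_of_notMem (fun hc => hj (Finset.mem_of_mem_erase hc)),
            Finset.card_erase_of_mem hmS, hcard]
          omega
        rw [Finset.sum_insert (fun hc => hj (Finset.mem_of_mem_erase hc)),
          Finset.sum_erase_eq_sub hmS, hsum] at hsum'
        rw [hρ, hm] at h
        linarith
      refine ⟨ρ, fun j => if j ∈ Sst then a j - ρ else 0, hρ0, ?_, ?_, ?_⟩
      · intro j
        by_cases hj : j ∈ Sst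
        · simp only [hj, if_true, sub_nonneg]; exact hρle j hj
        · simp [hj]
      · intro j
        by_cases hj : j ∈ Sst
        · simp [hj]
        · simp only [hj, if_false, add_zero]; exact hout j hj
      · have : (∑ j, if j ∈ Sst then a j - ρ else 0) = ∑ j ∈ Sst, (a j - ρ) := by
          rw [Finset.sum_ite_mem, Finset.univ_inter]
        rw [this, Finset.sum_sub_distrib, Finset.sum_const, hcard, nsmul_eq_mul, hsum]
        ring
  · -- lower bound
    rintro t ⟨ρ, σ, hρ, hσ, hfeas, rfl⟩
    apply Finset.sup'_le
    intro S hS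
    simp only [hT, Finset.mem_filter] at hS
    calc (∑ j ∈ S, a j) ≤ ∑ j ∈ S, (ρ + σ j) := Finset.sum_le_sum (fun j _ => hfeas j)
      _ = S.card * ρ + ∑ j ∈ S, σ j := by rw [Finset.sum_add_distrib, Finset.sum_const, nsmul_eq_mul]
      _ ≤ (Γ : ℝ) * ρ + ∑ j, σ j := by
          apply add_le_add
          · exact mul_le_mul_of_nonneg_right (Nat.cast_le.mpr hS.2) hρ
          · exact Finset.sum_le_sum_of_subset_of_nonneg (Finset.subset_univ S) (fun j _ _ => hσ j)
end

section
/- Dualization of the robust facility-load constraint (first half of Theorem 1, single-facility form): for v ∈ ℝ and x : J → ℝ with x_j ≥ 0 for all j ∈ J, the inequality v ≥ ∑_{j ∈ J} d_j x_j + max_{S ⊆ J, |S| ≤ Γ} ∑_{j ∈ S} d̂_j x_j holds if and only if there exist ρ ∈ ℝ and σ : J → ℝ with ρ ≥ 0, σ_j ≥ 0 for all j, ρ + σ_j ≥ d̂_j x_j for all j ∈ J, and v ≥ ∑_{j ∈ J} d_j x_j + Γ·ρ + ∑_{j ∈ J} σ_j. -/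
/-- Dualization of the robust facility-load constraint (first half of Theorem 1,
single-facility form): `v ≥ ∑ j, d j * x j + max_{|S| ≤ Γ} ∑ j ∈ S, d̂ j * x j`
iff there is a dual-feasible pair `(ρ, σ)` with
`v ≥ ∑ j, d j * x j + Γ·ρ + ∑ j, σ j`. -/
theorem robust_load_dualization {J : Type*} [Fintype J] [Nonempty J]
    (d dhat : J → ℝ) (hd : ∀ j, 0 ≤ d j) (hdhat : ∀ j, 0 ≤ dhat j)
    (Γ : ℕ) (hΓ : Γ ≤ Fintype.card J)
    (v : ℝ) (x : J → ℝ) (hx : ∀ j, 0 ≤ x j) :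
    (∑ j, d j * x j +
        (Finset.univ.powerset.filter (fun S : Finset J => S.card ≤ Γ)).sup'
          ⟨∅, by simp⟩ (fun S => ∑ j ∈ S, dhat j * x j) ≤ v) ↔
      ∃ (ρ : ℝ) (σ : J → ℝ), 0 ≤ ρ ∧ (∀ j, 0 ≤ σ j) ∧
        (∀ j, dhat j * x j ≤ ρ + σ j) ∧
        ∑ j, d j * x j + ((Γ : ℝ) * ρ + ∑ j, σ j) ≤ v := by
  classical
  set c : J → ℝ := fun j => dhat j * x j with hc
  have hc0 : ∀ j, 0 ≤ c j := fun j => mul_nonneg (hdhat j) (hx j)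
  set F := (Finset.univ.powerset.filter (fun S : Finset J => S.card ≤ Γ)) with hF
  have hFne : F.Nonempty := ⟨∅, by simp [hF]⟩
  have hmemF : ∀ S : Finset J, S.card ≤ Γ → S ∈ F := by
    intro S hS; simp [hF, hS]
  have hsup_eq : (Finset.univ.powerset.filter
        (fun S : Finset J => S.card ≤ Γ)).sup' ⟨∅, by simp⟩
        (fun S => ∑ j ∈ S, dhat j * x j)
      = F.sup' hFne (fun S => ∑ j ∈ S, c j) := rfl
  rw [hsup_eq]
  have h0 : (0:ℝ) ≤ F.sup' hFne (fun S => ∑ j ∈ S, c j) := by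
    have := Finset.le_sup' (fun S : Finset J => ∑ j ∈ S, c j) (hmemF ∅ (by simp))
    simpa only [Finset.sum_empty] using this
  constructor
  · intro hv
    -- the maximum is attained at some S, which we extend to T of card exactly Γ
    obtain ⟨S, hSF, hSmax⟩ := F.exists_max_image (fun S => ∑ j ∈ S, c j) hFne
    have hsup : F.sup' hFne (fun S => ∑ j ∈ S, c j) = ∑ j ∈ S, c j :=
      le_antisymm (Finset.sup'_le _ _ hSmax)
        (Finset.le_sup' (fun S : Finset J => ∑ j ∈ S, c j) hSF)
    have hScard : S.card ≤ Γ := by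
      have := hSF; simp [hF] at this; exact this
    obtain ⟨T, hST, hTcard⟩ := Finset.exists_superset_card_eq hScard hΓ
    have hTF : T ∈ F := hmemF T (le_of_eq hTcard)
    have hTmax : ∑ j ∈ T, c j = ∑ j ∈ S, c j := by
      refine le_antisymm (hSmax T hTF) ?_
      exact Finset.sum_le_sum_of_subset_of_nonneg hST (fun j _ _ => hc0 j)
    rcases Nat.eq_zero_or_pos Γ with hΓ0 | hΓpos
    · -- Γ = 0 : take ρ large enough, σ = 0
      refine ⟨Finset.univ.sup' Finset.univ_nonempty c, 0, ?_, fun j => le_rfl, ?_, ?_⟩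
      · exact le_trans (hc0 (Classical.arbitrary J))
          (Finset.le_sup' c (Finset.mem_univ _))
      · intro j
        have := Finset.le_sup' c (Finset.mem_univ j)
        show c j ≤ _ + (0 : J → ℝ) j
        simpa only [Pi.zero_apply, add_zero] using this
      · simp only [hΓ0, Nat.cast_zero, zero_mul, Pi.zero_apply,
          Finset.sum_const_zero, add_zero, zero_add]
        linarith
    · -- Γ ≥ 1
      have hTne : T.Nonempty := Finset.card_pos.mp (hTcard ▸ hΓpos)
      set ρ := T.inf' hTne c with hρdef
      obtain ⟨j₀, hj₀T, hj₀⟩ := Finset.exists_mem_eq_inf' hTne c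
      have hρj₀ : ρ = c j₀ := hρdef.trans hj₀
      have hρ0 : 0 ≤ ρ := by rw [hρj₀]; exact hc0 j₀
      have hρle : ∀ j ∈ T, ρ ≤ c j := fun j hj => Finset.inf'_le c hj
      -- for j ∉ T we have c j ≤ ρ, else swapping j₀ for j would improve T
      have hout : ∀ j, j ∉ T → c j ≤ ρ := by
        intro j hj
        by_contra hlt
        push_neg at hlt
        set T' := insert j (T.erase j₀) with hT'
        have hjnot : j ∉ T.erase j₀ := fun h => hj (Finset.mem_of_mem_erase h)
        have hT'card : T'.card = Γ := by
          rw [hT', Finset.card_insert_of_notMem hjnot,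
            Finset.card_erase_of_mem hj₀T, hTcard]
          omega
        have hT'F : T' ∈ F := hmemF T' (le_of_eq hT'card)
        have hsum' : ∑ k ∈ T', c k = ∑ k ∈ T.erase j₀, c k + c j := by
          rw [hT', Finset.sum_insert hjnot]; ring
        have hTsum : ∑ k ∈ T.erase j₀, c k + c j₀ = ∑ k ∈ T, c k :=
          Finset.sum_erase_add T c hj₀T
        have hgt : ∑ k ∈ T, c k < ∑ k ∈ T', c k := by
          rw [hsum', ← hTsum]
          have : ρ = c j₀ := hρj₀
          linarith
        have := hSmax T' hT'F
        rw [← hTmax] at this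
        linarith
      refine ⟨ρ, fun j => max (c j - ρ) 0, hρ0, fun j => le_max_right _ _, ?_, ?_⟩
      · intro j
        have := le_max_left (c j - ρ) 0
        show c j ≤ ρ + max (c j - ρ) 0
        linarith
      · have hσsum : ∑ j, max (c j - ρ) 0 = ∑ j ∈ T, (c j - ρ) := by
          rw [← Finset.sum_subset (Finset.subset_univ T)]
          · exact Finset.sum_congr rfl
              (fun j hj => max_eq_left (by linarith [hρle j hj]))
          · intro j _ hj
            exact max_eq_right (by linarith [hout j hj])
        have hkey : (Γ : ℝ) * ρ + ∑ j, max (c j - ρ) 0 = ∑ j ∈ T, c j := by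
          rw [hσsum, Finset.sum_sub_distrib, Finset.sum_const, hTcard]
          ring
        calc ∑ j, d j * x j + ((Γ : ℝ) * ρ + ∑ j, max (c j - ρ) 0)
            = ∑ j, d j * x j + ∑ j ∈ T, c j := by rw [hkey]
          _ = ∑ j, d j * x j + F.sup' hFne (fun S => ∑ j ∈ S, c j) := by
              rw [hsup, hTmax]
          _ ≤ v := hv
  · rintro ⟨ρ, σ, hρ, hσ, hcov, hsum⟩
    have hsup : F.sup' hFne (fun S => ∑ j ∈ S, c j) ≤ (Γ : ℝ) * ρ + ∑ j, σ j := by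
      apply Finset.sup'_le
      intro S hSF
      have hScard : S.card ≤ Γ := by simp [hF] at hSF; exact hSF
      calc ∑ j ∈ S, c j ≤ ∑ j ∈ S, (ρ + σ j) :=
            Finset.sum_le_sum (fun j _ => hcov j)
        _ = S.card * ρ + ∑ j ∈ S, σ j := by
            rw [Finset.sum_add_distrib, Finset.sum_const]; ring
        _ ≤ (Γ : ℝ) * ρ + ∑ j, σ j :=
            add_le_add (mul_le_mul_of_nonneg_right (Nat.cast_le.mpr hScard) hρ)
              (Finset.sum_le_sum_of_subset_of_nonneg (Finset.subset_univ S)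
                (fun j _ _ => hσ j))
    linarith
end

section
/- Dualization of the robust coverage constraint (second half of Theorem 1): for x : I × J → ℝ with x_{ij} ≥ 0 for all (i, j) and D ∈ ℝ, the inequality ∑_{i ∈ I} ∑_{j ∈ J} d_j x_{ij} − max_{S ⊆ J, |S| ≤ Γ} ∑_{i ∈ I} ∑_{j ∈ S} d̂_j x_{ij} ≥ D holds if and only if there exist τ ∈ ℝ and π : J → ℝ with τ ≥ 0, π_j ≥ 0 for all j, τ + π_j ≥ ∑_{i ∈ I} d̂_j x_{ij} for all j ∈ J, and ∑_{i ∈ I} ∑_{j ∈ J} d_j x_{ij} − Γ·τ − ∑_{j ∈ J} π_j ≥ D. -/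
/-- Key lemma: existence of an optimal dual pair `(τ, π)` whose dual objective
`Γ·τ + ∑ π` is at most the max of `∑ j ∈ S, c j` over `|S| ≤ Γ`. -/
lemma robust_dual_exists {J : Type*} [Fintype J] [Nonempty J]
    (c : J → ℝ) (hc : ∀ j, 0 ≤ c j) (Γ : ℕ) (hΓ : Γ ≤ Fintype.card J) :
    ∃ (τ : ℝ) (π : J → ℝ), 0 ≤ τ ∧ (∀ j, 0 ≤ π j) ∧ (∀ j, c j ≤ τ + π j) ∧
      (Γ : ℝ) * τ + ∑ j, π j ≤
        (Finset.univ.powerset.filter (fun S : Finset J => S.card ≤ Γ)).sup'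
          ⟨∅, by simp⟩ (fun S => ∑ j ∈ S, c j) := by
  classical
  rcases Nat.eq_zero_or_pos Γ with hΓ0 | hΓ1
  · -- Γ = 0 : take τ = max c, π = 0
    subst hΓ0
    refine ⟨Finset.univ.sup' Finset.univ_nonempty c, fun _ => 0, ?_, fun _ => le_refl 0,
      ?_, ?_⟩
    · exact le_trans (hc (Classical.arbitrary J))
        (Finset.le_sup' c (Finset.mem_univ _))
    · intro j
      simp only [add_zero]
      exact Finset.le_sup' c (Finset.mem_univ j)
    · have hemp : (∅ : Finset J) ∈
          Finset.univ.powerset.filter (fun S : Finset J => S.card ≤ 0) := by simp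
      have := Finset.le_sup' (fun S : Finset J => ∑ j ∈ S, c j) hemp
      simpa using this
  · -- Γ ≥ 1 : take a max-weight Γ-subset S₀, τ = min of c on S₀, π j = (c j - τ)⁺
    obtain ⟨S₁, -, hS₁card⟩ :=
      Finset.exists_subset_card_eq (by rwa [Finset.card_univ] : Γ ≤ (Finset.univ : Finset J).card)
    have hTne : (Finset.univ.powerset.filter (fun S : Finset J => S.card = Γ)).Nonempty :=
      ⟨S₁, by simp [hS₁card]⟩
    obtain ⟨S₀, hS₀mem, hS₀max⟩ :=
      Finset.exists_max_image _ (fun S : Finset J => ∑ j ∈ S, c j) hTne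
    have hS₀card : S₀.card = Γ := (Finset.mem_filter.mp hS₀mem).2
    have hS₀ne : S₀.Nonempty := Finset.card_pos.mp (hS₀card ▸ hΓ1)
    set τ : ℝ := S₀.inf' hS₀ne c with hτdef
    have hτ0 : 0 ≤ τ := Finset.le_inf' hS₀ne c (fun j _ => hc j)
    have hτle : ∀ j ∈ S₀, τ ≤ c j := fun j hj => Finset.inf'_le c hj
    set π : J → ℝ := fun j => max (c j - τ) 0 with hπdef
    -- off S₀, c j ≤ τ (else swapping in j would improve S₀)
    have hoff : ∀ j ∉ S₀, c j ≤ τ := by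
      intro j hj
      by_contra h
      push_neg at h
      obtain ⟨j0, hj0mem, hj0eq⟩ := Finset.exists_mem_eq_inf' hS₀ne c
      have hτj0 : τ = c j0 := hj0eq
      set S' : Finset J := insert j (S₀.erase j0) with hS'def
      have hjne : j ∉ S₀.erase j0 := fun h' => hj (Finset.mem_of_mem_erase h')
      have hS'card : S'.card = Γ := by
        rw [hS'def, Finset.card_insert_of_notMem hjne,
          Finset.card_erase_of_mem hj0mem, hS₀card]
        omega
      have hS'mem : S' ∈ Finset.univ.powerset.filter (fun S : Finset J => S.card = Γ) := by
        simp [hS'card]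
      have hsum : ∑ k ∈ S₀, c k < ∑ k ∈ S', c k := by
        rw [hS'def, Finset.sum_insert hjne,
          ← Finset.add_sum_erase _ c hj0mem]
        have : c j0 < c j := by rw [← hτj0]; exact h
        linarith
      exact absurd (hS₀max S' hS'mem) (not_le.mpr hsum)
    refine ⟨τ, π, hτ0, fun j => le_max_right _ _, fun j => by
      have := le_max_left (c j - τ) 0
      simp only [hπdef]
      linarith, ?_⟩
    have hπon : ∀ j ∈ S₀, π j = c j - τ := by
      intro j hj
      simp only [hπdef]
      exact max_eq_left (by linarith [hτle j hj])
    have hπoff : ∀ j ∈ Finset.univ \ S₀, π j = 0 := by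
      intro j hj
      simp only [hπdef]
      exact max_eq_right (by linarith [hoff j (Finset.mem_sdiff.mp hj).2])
    have hsumπ : ∑ j, π j = ∑ j ∈ S₀, c j - (Γ : ℝ) * τ := by
      rw [← Finset.sum_subset (Finset.subset_univ S₀)
        (fun j _ hj => hπoff j (Finset.mem_sdiff.mpr ⟨Finset.mem_univ j, hj⟩))]
      rw [Finset.sum_congr rfl hπon, Finset.sum_sub_distrib, Finset.sum_const,
        hS₀card, nsmul_eq_mul]
    have hS₀feas : S₀ ∈ Finset.univ.powerset.filter (fun S : Finset J => S.card ≤ Γ) := by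
      simp [hS₀card]
    have hle := Finset.le_sup' (fun S : Finset J => ∑ j ∈ S, c j) hS₀feas
    rw [hsumπ]
    linarith

/-- Dualization of the robust coverage constraint (second half of Theorem 1):
`∑ i ∑ j, d j * x i j − max_{|S| ≤ Γ} ∑ i ∑ j ∈ S, d̂ j * x i j ≥ D` iff there
are `τ ≥ 0` and `π ≥ 0` with `τ + π j ≥ ∑ i, d̂ j * x i j` for all `j` and
`∑ i ∑ j, d j * x i j − Γ·τ − ∑ j, π j ≥ D`. -/
theorem robust_coverage_dualization {I J : Type*} [Fintype I] [Nonempty I]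
    [Fintype J] [Nonempty J]
    (d dhat : J → ℝ) (hd : ∀ j, 0 ≤ d j) (hdhat : ∀ j, 0 ≤ dhat j)
    (Γ : ℕ) (hΓ : Γ ≤ Fintype.card J)
    (x : I → J → ℝ) (hx : ∀ i j, 0 ≤ x i j) (D : ℝ) :
    (D ≤ ∑ i, ∑ j, d j * x i j -
        (Finset.univ.powerset.filter (fun S : Finset J => S.card ≤ Γ)).sup'
          ⟨∅, by simp⟩ (fun S => ∑ i, ∑ j ∈ S, dhat j * x i j)) ↔
      ∃ (τ : ℝ) (π : J → ℝ), 0 ≤ τ ∧ (∀ j, 0 ≤ π j) ∧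
        (∀ j, ∑ i, dhat j * x i j ≤ τ + π j) ∧
        D ≤ ∑ i, ∑ j, d j * x i j - ((Γ : ℝ) * τ + ∑ j, π j) := by
  set c : J → ℝ := fun j => ∑ i, dhat j * x i j with hcdef
  have hc : ∀ j, 0 ≤ c j := fun j =>
    Finset.sum_nonneg (fun i _ => mul_nonneg (hdhat j) (hx i j))
  have hswap : ∀ S : Finset J, ∑ i, ∑ j ∈ S, dhat j * x i j = ∑ j ∈ S, c j :=
    fun S => Finset.sum_comm
  have hsupeq :
      (Finset.univ.powerset.filter (fun S : Finset J => S.card ≤ Γ)).sup'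
          ⟨∅, by simp⟩ (fun S => ∑ i, ∑ j ∈ S, dhat j * x i j) =
      (Finset.univ.powerset.filter (fun S : Finset J => S.card ≤ Γ)).sup'
          ⟨∅, by simp⟩ (fun S => ∑ j ∈ S, c j) :=
    Finset.sup'_congr _ rfl (fun S _ => hswap S)
  rw [hsupeq]
  constructor
  · intro h
    obtain ⟨τ, π, hτ0, hπ0, hfeas, hobj⟩ := robust_dual_exists c hc Γ hΓ
    exact ⟨τ, π, hτ0, hπ0, hfeas, by linarith⟩
  · rintro ⟨τ, π, hτ0, hπ0, hfeas, hobj⟩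
    have hsuple :
        (Finset.univ.powerset.filter (fun S : Finset J => S.card ≤ Γ)).sup'
          ⟨∅, by simp⟩ (fun S => ∑ j ∈ S, c j) ≤ (Γ : ℝ) * τ + ∑ j, π j := by
      apply Finset.sup'_le
      intro S hS
      have hScard : S.card ≤ Γ := (Finset.mem_filter.mp hS).2
      calc ∑ j ∈ S, c j ≤ ∑ j ∈ S, (τ + π j) :=
            Finset.sum_le_sum (fun j _ => hfeas j)
        _ = S.card * τ + ∑ j ∈ S, π j := by
            rw [Finset.sum_add_distrib, Finset.sum_const, nsmul_eq_mul]
        _ ≤ (Γ : ℝ) * τ + ∑ j, π j :=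
            add_le_add (mul_le_mul_of_nonneg_right (Nat.cast_le.mpr hScard) hτ0)
              (Finset.sum_le_sum_of_subset_of_nonneg (Finset.subset_univ S)
                (fun j _ _ => hπ0 j))
    linarith
end

section
/- Theorem 1 (equivalence of the robust formulation and its dualized extended formulation): let y : I → ℝ with y_i ∈ {0, 1} for all i ∈ I, v : I → ℝ, and x : I × J → ℝ with x_{ij} ≥ 0 for all (i, j) and x_{ij} = 0 whenever i ∉ I(j). Then the following are equivalent. (A) For every i ∈ I, v_i ≥ ∑_{j ∈ J} d_j x_{ij} + max_{S ⊆ J, |S| ≤ Γ} ∑_{j ∈ S} d̂_j x_{ij}; ∑_{i ∈ I} ∑_{j ∈ J} d_j x_{ij} − max_{S ⊆ J, |S| ≤ Γ} ∑_{i ∈ I} ∑_{j ∈ S} d̂_j x_{ij} ≥ D; for every j ∈ J, ∑_{i ∈ I} x_{ij} ≤ 1; and x_{ij} ≤ y_i for every j ∈ J and i ∈ I(j). (B) There exist ρ : I → ℝ, σ : I × J → ℝ, τ ∈ ℝ and π : J → ℝ, all componentwise nonnegative, such that: for every i ∈ I, v_i − ∑_{j ∈ J} d_j x_{ij} − (Γ·ρ_i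 + ∑_{j ∈ J} σ_{ij}) ≥ 0; ∑_{i ∈ I} ∑_{j ∈ J} d_j x_{ij} − (Γ·τ + ∑_{j ∈ J} π_j) ≥ D; for every j ∈ J, τ + π_j ≥ ∑_{i ∈ I} d̂_j x_{ij}; for every i ∈ I and j ∈ J, ρ_i + σ_{ij} ≥ d̂_j x_{ij}; for every j ∈ J, ∑_{i ∈ I} x_{ij} ≤ 1; and x_{ij} ≤ y_i for every j ∈ J and i ∈ I(j). -/
open Finset

lemma weak_dual {J : Type*} [Fintype J] (w : J → ℝ) (Γ : ℕ)
    (ρ : ℝ) (σ : J → ℝ) (hρ : 0 ≤ ρ) (hσ : ∀ j, 0 ≤ σ j) (h : ∀ j, w j ≤ ρ + σ j) :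
    ∀ S : Finset J, S.card ≤ Γ → ∑ j ∈ S, w j ≤ (Γ : ℝ) * ρ + ∑ j, σ j := by
  intro S hS
  calc ∑ j ∈ S, w j ≤ ∑ j ∈ S, (ρ + σ j) := Finset.sum_le_sum (fun j _ => h j)
    _ = S.card * ρ + ∑ j ∈ S, σ j := by rw [Finset.sum_add_distrib, Finset.sum_const, nsmul_eq_mul]
    _ ≤ (Γ : ℝ) * ρ + ∑ j, σ j := by
        have h1 : (S.card : ℝ) * ρ ≤ (Γ : ℝ) * ρ :=
          mul_le_mul_of_nonneg_right (by exact_mod_cast hS) hρ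
        have h2 : ∑ j ∈ S, σ j ≤ ∑ j, σ j :=
          Finset.sum_le_sum_of_subset_of_nonneg (Finset.subset_univ S) (fun j _ _ => hσ j)
        linarith

lemma strong_dual {J : Type*} [Fintype J] [Nonempty J] [DecidableEq J] (w : J → ℝ)
    (hw : ∀ j, 0 ≤ w j) (Γ : ℕ) (hΓ : Γ ≤ Fintype.card J) :
    ∃ (ρ : ℝ) (σ : J → ℝ), 0 ≤ ρ ∧ (∀ j, 0 ≤ σ j) ∧ (∀ j, w j ≤ ρ + σ j) ∧
    ∃ S : Finset J, S.card ≤ Γ ∧ (Γ : ℝ) * ρ + ∑ j, σ j ≤ ∑ j ∈ S, w j := by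
  -- pick S maximizing the sum among sets of card exactly Γ
  obtain ⟨S0, -, hS0card⟩ := Finset.exists_subset_card_eq (s := (Finset.univ : Finset J)) (n := Γ)
    (by simpa using hΓ)
  have hne : ((Finset.univ : Finset J).powerset.filter (fun S => S.card = Γ)).Nonempty :=
    ⟨S0, by simp [hS0card]⟩
  obtain ⟨S, hSmem, hSmax⟩ := Finset.exists_max_image _ (fun S => ∑ j ∈ S, w j) hne
  have hScard : S.card = Γ := by simpa using (Finset.mem_filter.mp hSmem).2
  -- top property
  have htop : ∀ j ∈ S, ∀ k, k ∉ S → w k ≤ w j := by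
    intro j hj k hk
    by_contra hlt
    push_neg at hlt
    set S' := insert k (S.erase j) with hS'
    have hk' : k ∉ S.erase j := fun h => hk (Finset.mem_of_mem_erase h)
    have hcard' : S'.card = Γ := by
      rw [hS', Finset.card_insert_of_notMem hk', Finset.card_erase_of_mem hj, hScard]
      have h1 : 1 ≤ S.card := Finset.card_pos.mpr ⟨j, hj⟩
      omega
    have hmem' : S' ∈ (Finset.univ : Finset J).powerset.filter (fun S => S.card = Γ) := by
      simp [hcard']
    have hsum' : ∑ x ∈ S', w x = w k + (∑ x ∈ S, w x - w j) := by
      rw [hS', Finset.sum_insert hk']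
      have := Finset.sum_erase_add S w hj
      linarith
    have := hSmax S' hmem'
    rw [hsum'] at this
    linarith
  by_cases hS : S.Nonempty
  · set t := S.inf' hS w with ht
    refine ⟨t, fun j => max (w j - t) 0, ?_, fun j => le_max_right _ _, ?_, S, le_of_eq hScard, ?_⟩
    · exact Finset.le_inf' hS w (fun j _ => hw j)
    · intro j; have := le_max_left (w j - t) 0; linarith
    · have hσeq : ∀ j, max (w j - t) 0 = if j ∈ S then w j - t else 0 := by
        intro j
        by_cases hj : j ∈ S
        · simp only [hj, if_true]
          exact max_eq_left (by linarith [Finset.inf'_le w hj])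
        · simp only [hj, if_false]
          have : w j ≤ t := Finset.le_inf' hS w (fun j' hj' => htop j' hj' j hj)
          exact max_eq_right (by linarith)
      have : ∑ j, max (w j - t) 0 = ∑ j ∈ S, (w j - t) := by
        rw [Finset.sum_congr rfl (fun j _ => hσeq j)]
        rw [Finset.sum_ite_mem, Finset.univ_inter]
      rw [this, Finset.sum_sub_distrib, Finset.sum_const, nsmul_eq_mul, hScard]
      ring_nf
      linarith
  · -- S empty, so Γ = 0
    have hΓ0 : Γ = 0 := by
      rw [← hScard]; simpa [Finset.card_eq_zero, Finset.not_nonempty_iff_eq_empty.mp hS]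
    refine ⟨Finset.univ.sup' Finset.univ_nonempty w, fun _ => 0, ?_, fun _ => le_refl _, ?_, ∅, by simp, ?_⟩
    · obtain ⟨j⟩ := ‹Nonempty J›
      exact le_trans (hw j) (Finset.le_sup' w (Finset.mem_univ j))
    · intro j; simpa only [add_zero] using Finset.le_sup' w (Finset.mem_univ j)
    · simp [hΓ0]

/-- Theorem 1: equivalence of the robust formulation (A) and its dualized
extended formulation (B) for the congested partial set covering location
problem. -/
theorem robust_extended_formulation_equiv {I J : Type*}
    [Fintype I] [Nonempty I] [Fintype J] [Nonempty J]
    (d dhat : J → ℝ) (hd : ∀ j, 0 ≤ d j) (hdhat : ∀ j, 0 ≤ dhat j)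
    (cov : J → Finset I) (D : ℝ) (Γ : ℕ) (hΓ : Γ ≤ Fintype.card J)
    (y : I → ℝ) (hy : ∀ i, y i = 0 ∨ y i = 1)
    (v : I → ℝ) (x : I → J → ℝ) (hx : ∀ i j, 0 ≤ x i j)
    (hx0 : ∀ i j, i ∉ cov j → x i j = 0) :
    -- (A): the robust constraints with inner maximizations
    ((∀ i, ∑ j, d j * x i j +
          (Finset.univ.powerset.filter (fun S : Finset J => S.card ≤ Γ)).sup'
            ⟨∅, by simp⟩ (fun S => ∑ j ∈ S, dhat j * x i j) ≤ v i) ∧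
      (D ≤ ∑ i, ∑ j, d j * x i j -
          (Finset.univ.powerset.filter (fun S : Finset J => S.card ≤ Γ)).sup'
            ⟨∅, by simp⟩ (fun S => ∑ i, ∑ j ∈ S, dhat j * x i j)) ∧
      (∀ j, ∑ i, x i j ≤ 1) ∧
      (∀ j, ∀ i ∈ cov j, x i j ≤ y i)) ↔
    -- (B): the dualized extended formulation
    (∃ (ρ : I → ℝ) (σ : I → J → ℝ) (τ : ℝ) (π : J → ℝ),
      (∀ i, 0 ≤ ρ i) ∧ (∀ i j, 0 ≤ σ i j) ∧ 0 ≤ τ ∧ (∀ j, 0 ≤ π j) ∧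
      (∀ i, 0 ≤ v i - ∑ j, d j * x i j - ((Γ : ℝ) * ρ i + ∑ j, σ i j)) ∧
      (D ≤ ∑ i, ∑ j, d j * x i j - ((Γ : ℝ) * τ + ∑ j, π j)) ∧
      (∀ j, ∑ i, dhat j * x i j ≤ τ + π j) ∧
      (∀ i j, dhat j * x i j ≤ ρ i + σ i j) ∧
      (∀ j, ∑ i, x i j ≤ 1) ∧
      (∀ j, ∀ i ∈ cov j, x i j ≤ y i)) := by
  classical
  constructor
  · rintro ⟨hA1, hA2, hA3, hA4⟩
    -- per-facility duals
    have hkey : ∀ i : I, ∃ (ρ : ℝ) (σ : J → ℝ), 0 ≤ ρ ∧ (∀ j, 0 ≤ σ j) ∧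
        (∀ j, dhat j * x i j ≤ ρ + σ j) ∧
        ∃ S : Finset J, S.card ≤ Γ ∧ (Γ : ℝ) * ρ + ∑ j, σ j ≤ ∑ j ∈ S, dhat j * x i j :=
      fun i => strong_dual (fun j => dhat j * x i j)
        (fun j => mul_nonneg (hdhat j) (hx i j)) Γ hΓ
    choose ρ σ hρ hσ hcon S hScard hSbound using hkey
    -- global duals
    obtain ⟨τ, π, hτ, hπ, hτπcon, T, hTcard, hTbound⟩ :=
      strong_dual (fun j => ∑ i, dhat j * x i j)
        (fun j => Finset.sum_nonneg (fun i _ => mul_nonneg (hdhat j) (hx i j))) Γ hΓ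
    refine ⟨ρ, σ, τ, π, hρ, hσ, hτ, hπ, ?_, ?_, hτπcon, hcon, hA3, hA4⟩
    · intro i
      have hmem : S i ∈ Finset.univ.powerset.filter (fun S : Finset J => S.card ≤ Γ) := by
        simp [hScard i]
      have hle : ∑ j ∈ S i, dhat j * x i j ≤
          (Finset.univ.powerset.filter (fun S : Finset J => S.card ≤ Γ)).sup'
            ⟨∅, by simp⟩ (fun S => ∑ j ∈ S, dhat j * x i j) :=
        Finset.le_sup' (fun S : Finset J => ∑ j ∈ S, dhat j * x i j) hmem
      have := hA1 i
      have := hSbound i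
      linarith
    · have hmem : T ∈ Finset.univ.powerset.filter (fun S : Finset J => S.card ≤ Γ) := by
        simp [hTcard]
      have hle : ∑ i, ∑ j ∈ T, dhat j * x i j ≤
          (Finset.univ.powerset.filter (fun S : Finset J => S.card ≤ Γ)).sup'
            ⟨∅, by simp⟩ (fun S => ∑ i, ∑ j ∈ S, dhat j * x i j) :=
        Finset.le_sup' (fun S : Finset J => ∑ i, ∑ j ∈ S, dhat j * x i j) hmem
      have hcomm : ∑ j ∈ T, ∑ i, dhat j * x i j = ∑ i, ∑ j ∈ T, dhat j * x i j :=
        Finset.sum_comm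
      rw [hcomm] at hTbound
      linarith
  · rintro ⟨ρ, σ, τ, π, hρ, hσ, hτ, hπ, hB1, hB2, hB3, hB4, hB5, hB6⟩
    refine ⟨?_, ?_, hB5, hB6⟩
    · intro i
      have hsup : (Finset.univ.powerset.filter (fun S : Finset J => S.card ≤ Γ)).sup'
          ⟨∅, by simp⟩ (fun S => ∑ j ∈ S, dhat j * x i j) ≤ (Γ : ℝ) * ρ i + ∑ j, σ i j := by
        apply Finset.sup'_le
        intro S hS
        have hcard : S.card ≤ Γ := (Finset.mem_filter.mp hS).2
        exact weak_dual _ Γ (ρ i) (σ i) (hρ i) (hσ i) (hB4 i) S hcard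
      have := hB1 i
      linarith
    · have hsup : (Finset.univ.powerset.filter (fun S : Finset J => S.card ≤ Γ)).sup'
          ⟨∅, by simp⟩ (fun S => ∑ i, ∑ j ∈ S, dhat j * x i j) ≤ (Γ : ℝ) * τ + ∑ j, π j := by
        apply Finset.sup'_le
        intro S hS
        have hcard : S.card ≤ Γ := (Finset.mem_filter.mp hS).2
        have := weak_dual (fun j => ∑ i, dhat j * x i j) Γ τ π hτ hπ hB3 S hcard
        have hcomm : ∑ j ∈ S, ∑ i, dhat j * x i j = ∑ i, ∑ j ∈ S, dhat j * x i j :=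
          Finset.sum_comm
        linarith [hcomm ▸ this]
      linarith
end

section
/- The Benders subproblem is always feasible and bounded: for any ȳ, v̄ : I → ℝ with ȳ_i ≥ 0 and v̄_i ≥ 0 for all i ∈ I, the all-zero tuple (x, ρ, τ, π, σ) = (0, 0, 0, 0, 0) is subproblem-feasible for (ȳ, v̄), and every subproblem-feasible tuple for (ȳ, v̄) has coverage Z(x, τ, π) ≤ ∑_{j ∈ J} d_j; consequently 0 ≤ φ'(ȳ, v̄) ≤ ∑_{j ∈ J} d_j. -/
/-- A tuple `(x, ρ, τ, π, σ)` is subproblem-feasible for master solution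
`(ȳ, v̄)` of the Benders decomposition. -/
def SubFeasible {I J : Type*} [Fintype I] [Fintype J]
    (d dhat : J → ℝ) (Γ : ℕ) (cov : J → Finset I) (ybar vbar : I → ℝ)
    (x : I → J → ℝ) (ρ : I → ℝ) (τ : ℝ) (π : J → ℝ) (σ : I → J → ℝ) : Prop :=
  (∀ i j, 0 ≤ x i j) ∧ (∀ i, 0 ≤ ρ i) ∧ 0 ≤ τ ∧ (∀ j, 0 ≤ π j) ∧
  (∀ i j, 0 ≤ σ i j) ∧
  (∀ i j, i ∉ cov j → x i j = 0) ∧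
  (∀ i, ∑ j, d j * x i j + (Γ : ℝ) * ρ i + ∑ j, σ i j ≤ vbar i) ∧
  (∀ j, ∑ i, dhat j * x i j ≤ τ + π j) ∧
  (∀ i j, dhat j * x i j ≤ σ i j + ρ i) ∧
  (∀ j, ∑ i, x i j ≤ 1) ∧
  (∀ j, ∀ i ∈ cov j, x i j ≤ ybar i)

/-- The coverage `Z(x, τ, π)` achieved by a subproblem tuple. -/
def coverage {I J : Type*} [Fintype I] [Fintype J]
    (d : J → ℝ) (Γ : ℕ) (x : I → J → ℝ) (τ : ℝ) (π : J → ℝ) : ℝ :=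
  ∑ i, ∑ j, d j * x i j - (Γ : ℝ) * τ - ∑ j, π j

/-- The Benders subproblem value `φ'(ȳ, v̄)`: the supremum of the coverage over
all subproblem-feasible tuples for `(ȳ, v̄)`. -/
noncomputable def phi' {I J : Type*} [Fintype I] [Fintype J]
    (d dhat : J → ℝ) (Γ : ℕ) (cov : J → Finset I) (ybar vbar : I → ℝ) : ℝ :=
  sSup {t : ℝ | ∃ x ρ τ π σ,
    SubFeasible d dhat Γ cov ybar vbar x ρ τ π σ ∧ t = coverage d Γ x τ π}

section

variable {I J : Type*} [Fintype I] [Fintype J]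
  {d dhat : J → ℝ} {Γ : ℕ} {cov : J → Finset I} {ybar vbar : I → ℝ}

theorem subFeasible_zero (hybar : ∀ i, 0 ≤ ybar i) (hvbar : ∀ i, 0 ≤ vbar i) :
    SubFeasible d dhat Γ cov ybar vbar (fun _ _ => 0) (fun _ => 0) 0 (fun _ => 0)
      (fun _ _ => 0) := by
  refine ⟨fun _ _ => le_rfl, fun _ => le_rfl, le_rfl, fun _ => le_rfl, fun _ _ => le_rfl,
    fun _ _ _ => rfl, fun _ => ?_, fun _ => ?_, fun _ _ => ?_, fun _ => ?_,
    fun _ i _ => hybar i⟩ <;> simp [hvbar]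

theorem coverage_zero :
    coverage (I := I) d Γ (fun _ _ => 0) 0 (fun _ => 0) = 0 := by
  simp [coverage]

theorem sum_sum_mul_le_sum_of_sum_le_one {x : I → J → ℝ} (hd : ∀ j, 0 ≤ d j)
    (hx : ∀ j, ∑ i, x i j ≤ 1) :
    ∑ i, ∑ j, d j * x i j ≤ ∑ j, d j := by
  rw [Finset.sum_comm]
  refine Finset.sum_le_sum fun j _ => ?_
  rw [← Finset.mul_sum]
  exact mul_le_of_le_one_right (hd j) (hx j)

theorem SubFeasible.coverage_le {x : I → J → ℝ} {ρ : I → ℝ} {τ : ℝ} {π : J → ℝ}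
    {σ : I → J → ℝ} (hd : ∀ j, 0 ≤ d j)
    (h : SubFeasible d dhat Γ cov ybar vbar x ρ τ π σ) :
    coverage d Γ x τ π ≤ ∑ j, d j := by
  obtain ⟨-, -, hτ, hπ, -, -, -, -, -, hx, -⟩ := h
  have hserved := sum_sum_mul_le_sum_of_sum_le_one hd hx
  have hΓτ : 0 ≤ (Γ : ℝ) * τ := mul_nonneg Γ.cast_nonneg hτ
  have hπsum : 0 ≤ ∑ j, π j := Finset.sum_nonneg fun j _ => hπ j
  unfold coverage
  linarith

theorem sum_mem_upperBounds_coverage (hd : ∀ j, 0 ≤ d j) :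
    ∑ j, d j ∈ upperBounds {t : ℝ | ∃ x ρ τ π σ,
      SubFeasible d dhat Γ cov ybar vbar x ρ τ π σ ∧ t = coverage d Γ x τ π} := by
  rintro t ⟨x, ρ, τ, π, σ, h, rfl⟩
  exact h.coverage_le hd

theorem phi'_nonneg (hybar : ∀ i, 0 ≤ ybar i) (hvbar : ∀ i, 0 ≤ vbar i)
    (hd : ∀ j, 0 ≤ d j) : 0 ≤ phi' d dhat Γ cov ybar vbar :=
  le_csSup ⟨_, sum_mem_upperBounds_coverage hd⟩
    ⟨_, _, _, _, _, subFeasible_zero hybar hvbar, coverage_zero.symm⟩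

theorem phi'_le_sum (hd : ∀ j, 0 ≤ d j) : phi' d dhat Γ cov ybar vbar ≤ ∑ j, d j :=
  Real.sSup_le (sum_mem_upperBounds_coverage hd) (Finset.sum_nonneg fun j _ => hd j)

end

theorem benders_subproblem_feasible_bounded_general {I J : Type*}
    [Fintype I] [Fintype J]
    (d dhat : J → ℝ) (hd : ∀ j, 0 ≤ d j)
    (Γ : ℕ) (cov : J → Finset I)
    (ybar vbar : I → ℝ) (hybar : ∀ i, 0 ≤ ybar i) (hvbar : ∀ i, 0 ≤ vbar i) :
    SubFeasible d dhat Γ cov ybar vbar (fun _ _ => 0) (fun _ => 0) 0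
        (fun _ => 0) (fun _ _ => 0) ∧
    (∀ x ρ τ π σ, SubFeasible d dhat Γ cov ybar vbar x ρ τ π σ →
      coverage d Γ x τ π ≤ ∑ j, d j) ∧
    0 ≤ phi' d dhat Γ cov ybar vbar ∧ phi' d dhat Γ cov ybar vbar ≤ ∑ j, d j :=
  ⟨subFeasible_zero hybar hvbar, fun _ _ _ _ _ h => h.coverage_le hd,
    phi'_nonneg hybar hvbar hd, phi'_le_sum hd⟩

/-- The Benders subproblem is always feasible and bounded: the all-zero tuple is
subproblem-feasible, every subproblem-feasible tuple has coverage at most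
`∑ j, d j`, and consequently `0 ≤ φ'(ȳ, v̄) ≤ ∑ j, d j`. -/
theorem benders_subproblem_feasible_bounded {I J : Type*}
    [Fintype I] [Nonempty I] [Fintype J] [Nonempty J]
    (d dhat : J → ℝ) (hd : ∀ j, 0 ≤ d j) (hdhat : ∀ j, 0 ≤ dhat j)
    (Γ : ℕ) (cov : J → Finset I)
    (ybar vbar : I → ℝ) (hybar : ∀ i, 0 ≤ ybar i) (hvbar : ∀ i, 0 ≤ vbar i) :
    SubFeasible d dhat Γ cov ybar vbar (fun _ _ => 0) (fun _ => 0) 0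
        (fun _ => 0) (fun _ _ => 0) ∧
    (∀ x ρ τ π σ, SubFeasible d dhat Γ cov ybar vbar x ρ τ π σ →
      coverage d Γ x τ π ≤ ∑ j, d j) ∧
    0 ≤ phi' d dhat Γ cov ybar vbar ∧ phi' d dhat Γ cov ybar vbar ≤ ∑ j, d j :=
  benders_subproblem_feasible_bounded_general d dhat hd Γ cov ybar vbar hybar hvbar
end

section
/- Concavity of the Benders subproblem value function: for any ȳ¹, v̄¹, ȳ², v̄² : I → ℝ with all entries nonnegative and any θ ∈ [0, 1], one has φ'(θ·ȳ¹ + (1 − θ)·ȳ², θ·v̄¹ + (1 − θ)·v̄²) ≥ θ·φ'(ȳ¹, v̄¹) + (1 − θ)·φ'(ȳ², v̄²). -/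
/-!
Every constraint of the subproblem is linear jointly in the master data `(ȳ, v̄)` and the tuple
`(x, ρ, τ, π, σ)`, and the coverage is linear in the tuple. So the `θ`-combination of a tuple
feasible for `(ȳ¹, v̄¹)` with one feasible for `(ȳ², v̄²)` is feasible for the combined data and
has the combined coverage: if `S(ȳ, v̄)` is the set of attained coverages, then
`θ • S(ȳ¹, v̄¹) + (1 - θ) • S(ȳ², v̄²) ⊆ S(θ ȳ¹ + (1 - θ) ȳ², θ v̄¹ + (1 - θ) v̄²)`.
Taking suprema gives concavity, since these sets are nonempty (the zero tuple is feasible) and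
bounded above by `∑ⱼ dⱼ`.
-/

open Finset

open scoped Pointwise

theorem smul_csSup_add_smul_csSup_le {A B C : Set ℝ} {a b : ℝ} (ha : 0 ≤ a) (hb : 0 ≤ b)
    (hA : A.Nonempty) (hA' : BddAbove A) (hB : B.Nonempty) (hB' : BddAbove B)
    (hC : BddAbove C) (hsub : a • A + b • B ⊆ C) :
    a * sSup A + b * sSup B ≤ sSup C :=
  calc a * sSup A + b * sSup B = sSup (a • A + b • B) := by
        rw [csSup_add hA.smul_set (hA'.smul_of_nonneg ha) hB.smul_set (hB'.smul_of_nonneg hb),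
          Real.sSup_smul_of_nonneg ha, Real.sSup_smul_of_nonneg hb, smul_eq_mul, smul_eq_mul]
    _ ≤ sSup C := csSup_le_csSup hC (hA.smul_set.add hB.smul_set) hsub

theorem Finset.sum_mul_add_mul {ι : Type*} (s : Finset ι) (a b : ℝ) (f g : ι → ℝ) :
    ∑ i ∈ s, (a * f i + b * g i) = a * ∑ i ∈ s, f i + b * ∑ i ∈ s, g i := by
  rw [sum_add_distrib, mul_sum, mul_sum]

theorem mul_mul_add_mul (c a b x y : ℝ) : c * (a * x + b * y) = a * (c * x) + b * (c * y) := by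
  ring

section

variable {I J : Type*} [Fintype I] [Fintype J]
  {d dhat : J → ℝ} {Γ : ℕ} {cov : J → Finset I}

def coverageSet (d dhat : J → ℝ) (Γ : ℕ) (cov : J → Finset I) (ybar vbar : I → ℝ) : Set ℝ :=
  {t : ℝ | ∃ x ρ τ π σ, SubFeasible d dhat Γ cov ybar vbar x ρ τ π σ ∧ t = coverage d Γ x τ π}

theorem SubFeasible.zero {ybar vbar : I → ℝ} (hy : ∀ i, 0 ≤ ybar i) (hv : ∀ i, 0 ≤ vbar i) :
    SubFeasible d dhat Γ cov ybar vbar 0 0 0 0 0 := by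
  refine ⟨fun _ _ => le_rfl, fun _ => le_rfl, le_rfl, fun _ => le_rfl, fun _ _ => le_rfl,
    fun _ _ _ => rfl, fun i => ?_, fun j => ?_, fun i j => ?_, fun j => ?_, fun _ i _ => hy i⟩ <;>
    simp [hv]

theorem coverageSet_nonempty {ybar vbar : I → ℝ} (hy : ∀ i, 0 ≤ ybar i) (hv : ∀ i, 0 ≤ vbar i) :
    (coverageSet d dhat Γ cov ybar vbar).Nonempty :=
  ⟨_, 0, 0, 0, 0, 0, SubFeasible.zero hy hv, rfl⟩

theorem SubFeasible.coverage_le_sum (hd : ∀ j, 0 ≤ d j) {ybar vbar : I → ℝ} {x : I → J → ℝ}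
    {ρ : I → ℝ} {τ : ℝ} {π : J → ℝ} {σ : I → J → ℝ}
    (h : SubFeasible d dhat Γ cov ybar vbar x ρ τ π σ) :
    coverage d Γ x τ π ≤ ∑ j, d j := by
  obtain ⟨-, -, hτ, hπ, -, -, -, -, -, hx, -⟩ := h
  have hserved : ∑ i, ∑ j, d j * x i j ≤ ∑ j, d j := by
    rw [sum_comm]
    gcongr with j
    calc ∑ i, d j * x i j = d j * ∑ i, x i j := (mul_sum ..).symm
      _ ≤ d j := mul_le_of_le_one_right (hd j) (hx j)
  have hτ' : 0 ≤ (Γ : ℝ) * τ := by positivity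
  have hπ' : 0 ≤ ∑ j, π j := sum_nonneg fun j _ => hπ j
  unfold coverage
  linarith

theorem bddAbove_coverageSet (hd : ∀ j, 0 ≤ d j) (ybar vbar : I → ℝ) :
    BddAbove (coverageSet d dhat Γ cov ybar vbar) := by
  refine ⟨∑ j, d j, ?_⟩
  rintro _ ⟨x, ρ, τ, π, σ, h, rfl⟩
  exact h.coverage_le_sum hd

theorem SubFeasible.convexComb {θ : ℝ} (hθ₀ : 0 ≤ θ) (hθ₁ : θ ≤ 1)
    {y₁ v₁ y₂ v₂ : I → ℝ} {x₁ x₂ : I → J → ℝ} {ρ₁ ρ₂ : I → ℝ} {τ₁ τ₂ : ℝ} {π₁ π₂ : J → ℝ}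
    {σ₁ σ₂ : I → J → ℝ}
    (h₁ : SubFeasible d dhat Γ cov y₁ v₁ x₁ ρ₁ τ₁ π₁ σ₁)
    (h₂ : SubFeasible d dhat Γ cov y₂ v₂ x₂ ρ₂ τ₂ π₂ σ₂) :
    SubFeasible d dhat Γ cov (fun i => θ * y₁ i + (1 - θ) * y₂ i)
      (fun i => θ * v₁ i + (1 - θ) * v₂ i) (fun i j => θ * x₁ i j + (1 - θ) * x₂ i j)
      (fun i => θ * ρ₁ i + (1 - θ) * ρ₂ i) (θ * τ₁ + (1 - θ) * τ₂)
      (fun j => θ * π₁ j + (1 - θ) * π₂ j) (fun i j => θ * σ₁ i j + (1 - θ) * σ₂ i j) := by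
  obtain ⟨hx₁, hρ₁, hτ₁, hπ₁, hσ₁, hcov₁, hcap₁, hτπ₁, hσρ₁, hass₁, hy₁⟩ := h₁
  obtain ⟨hx₂, hρ₂, hτ₂, hπ₂, hσ₂, hcov₂, hcap₂, hτπ₂, hσρ₂, hass₂, hy₂⟩ := h₂
  have hθ : 0 ≤ 1 - θ := sub_nonneg.2 hθ₁
  have mix_nonneg {a b : ℝ} (ha : 0 ≤ a) (hb : 0 ≤ b) : 0 ≤ θ * a + (1 - θ) * b := by positivity
  have mix_le_mix {a₁ b₁ a₂ b₂ : ℝ} (h₁ : a₁ ≤ b₁) (h₂ : a₂ ≤ b₂) :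
      θ * a₁ + (1 - θ) * a₂ ≤ θ * b₁ + (1 - θ) * b₂ := by gcongr
  refine ⟨fun i j => mix_nonneg (hx₁ i j) (hx₂ i j), fun i => mix_nonneg (hρ₁ i) (hρ₂ i),
    mix_nonneg hτ₁ hτ₂, fun j => mix_nonneg (hπ₁ j) (hπ₂ j),
    fun i j => mix_nonneg (hσ₁ i j) (hσ₂ i j), fun i j hij => by simp [hcov₁ i j hij, hcov₂ i j hij],
    fun i => ?_, fun j => ?_, fun i j => ?_, fun j => ?_,
    fun j i hij => mix_le_mix (hy₁ j i hij) (hy₂ j i hij)⟩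
  · have := mix_le_mix (hcap₁ i) (hcap₂ i)
    simp only [mul_mul_add_mul, sum_mul_add_mul]
    linarith
  · have := mix_le_mix (hτπ₁ j) (hτπ₂ j)
    simp only [mul_mul_add_mul, sum_mul_add_mul]
    linarith
  · have := mix_le_mix (hσρ₁ i j) (hσρ₂ i j)
    simp only [mul_mul_add_mul]
    linarith
  · have := mix_le_mix (hass₁ j) (hass₂ j)
    simp only [sum_mul_add_mul]
    linarith

theorem coverage_convexComb (θ : ℝ) (x₁ x₂ : I → J → ℝ) (τ₁ τ₂ : ℝ) (π₁ π₂ : J → ℝ) :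
    coverage d Γ (fun i j => θ * x₁ i j + (1 - θ) * x₂ i j) (θ * τ₁ + (1 - θ) * τ₂)
      (fun j => θ * π₁ j + (1 - θ) * π₂ j) =
      θ * coverage d Γ x₁ τ₁ π₁ + (1 - θ) * coverage d Γ x₂ τ₂ π₂ := by
  simp only [coverage, mul_mul_add_mul, sum_mul_add_mul]
  ring

theorem convexComb_coverageSet_subset {θ : ℝ} (hθ₀ : 0 ≤ θ) (hθ₁ : θ ≤ 1)
    (y₁ v₁ y₂ v₂ : I → ℝ) :
    θ • coverageSet d dhat Γ cov y₁ v₁ + (1 - θ) • coverageSet d dhat Γ cov y₂ v₂ ⊆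
      coverageSet d dhat Γ cov (fun i => θ * y₁ i + (1 - θ) * y₂ i)
        (fun i => θ * v₁ i + (1 - θ) * v₂ i) := by
  rintro _ ⟨_, ⟨_, ⟨x₁, ρ₁, τ₁, π₁, σ₁, h₁, rfl⟩, rfl⟩, _, ⟨_, ⟨x₂, ρ₂, τ₂, π₂, σ₂, h₂, rfl⟩, rfl⟩,
    rfl⟩
  exact ⟨_, _, _, _, _, h₁.convexComb hθ₀ hθ₁ h₂, (coverage_convexComb θ x₁ x₂ τ₁ τ₂ π₁ π₂).symm⟩

end

theorem benders_subproblem_value_concave_general {I J : Type*}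
    [Fintype I] [Fintype J]
    (d dhat : J → ℝ) (hd : ∀ j, 0 ≤ d j)
    (Γ : ℕ) (cov : J → Finset I)
    (ybar₁ vbar₁ ybar₂ vbar₂ : I → ℝ)
    (hy₁ : ∀ i, 0 ≤ ybar₁ i) (hv₁ : ∀ i, 0 ≤ vbar₁ i)
    (hy₂ : ∀ i, 0 ≤ ybar₂ i) (hv₂ : ∀ i, 0 ≤ vbar₂ i)
    (θ : ℝ) (hθ₀ : 0 ≤ θ) (hθ₁ : θ ≤ 1) :
    θ * phi' d dhat Γ cov ybar₁ vbar₁ + (1 - θ) * phi' d dhat Γ cov ybar₂ vbar₂ ≤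
      phi' d dhat Γ cov (fun i => θ * ybar₁ i + (1 - θ) * ybar₂ i)
        (fun i => θ * vbar₁ i + (1 - θ) * vbar₂ i) :=
  smul_csSup_add_smul_csSup_le hθ₀ (sub_nonneg.2 hθ₁)
    (coverageSet_nonempty hy₁ hv₁) (bddAbove_coverageSet hd _ _)
    (coverageSet_nonempty hy₂ hv₂) (bddAbove_coverageSet hd _ _)
    (bddAbove_coverageSet hd _ _) (convexComb_coverageSet_subset hθ₀ hθ₁ _ _ _ _)

/-- Concavity of the Benders subproblem value function `φ'`. -/
theorem benders_subproblem_value_concave {I J : Type*}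
    [Fintype I] [Nonempty I] [Fintype J] [Nonempty J]
    (d dhat : J → ℝ) (hd : ∀ j, 0 ≤ d j) (hdhat : ∀ j, 0 ≤ dhat j)
    (Γ : ℕ) (cov : J → Finset I)
    (ybar₁ vbar₁ ybar₂ vbar₂ : I → ℝ)
    (hy₁ : ∀ i, 0 ≤ ybar₁ i) (hv₁ : ∀ i, 0 ≤ vbar₁ i)
    (hy₂ : ∀ i, 0 ≤ ybar₂ i) (hv₂ : ∀ i, 0 ≤ vbar₂ i)
    (θ : ℝ) (hθ₀ : 0 ≤ θ) (hθ₁ : θ ≤ 1) :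
    θ * phi' d dhat Γ cov ybar₁ vbar₁ + (1 - θ) * phi' d dhat Γ cov ybar₂ vbar₂ ≤
      phi' d dhat Γ cov (fun i => θ * ybar₁ i + (1 - θ) * ybar₂ i)
        (fun i => θ * vbar₁ i + (1 - θ) * vbar₂ i) :=
  benders_subproblem_value_concave_general d dhat hd Γ cov ybar₁ vbar₁ ybar₂ vbar₂ hy₁ hv₁ hy₂ hv₂ θ
    hθ₀ hθ₁
end

section
/- Attainment of the Benders subproblem supremum: for any ȳ, v̄ : I → ℝ with ȳ_i ≥ 0 and v̄_i ≥ 0 for all i ∈ I, there exists a subproblem-feasible tuple (x, ρ, τ, π, σ) for (ȳ, v̄) whose coverage satisfies Z(x, τ, π) = φ'(ȳ, v̄); that is, the supremum defining φ'(ȳ, v̄) is attained. -/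
/-!
The feasible tuples form a closed set and the coverage is continuous, but the set is unbounded.
The robust terms `d̂_j x_ij` and `∑_i d̂_j x_ij` that `ρ, τ, π, σ` must dominate never exceed
`M = ∑_j |d̂_j|`, so capping these variables at `M` keeps a tuple feasible without lowering its
coverage. As `0` is feasible, the supremum is therefore the maximum of the coverage over the
feasible tuples in a compact box.
-/

namespace BendersSubproblem

section Bounds

variable {α : Type*} [Field α] [LinearOrder α] [IsStrictOrderedRing α]

theorem le_min_add_min {s a b M : α} (ha : 0 ≤ a) (hb : 0 ≤ b) (hM : 0 ≤ M)
    (hab : s ≤ a + b) (hsM : s ≤ M) : s ≤ min a M + min b M := by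
  rcases min_cases a M with ⟨h, _⟩ | ⟨h, _⟩ <;> rcases min_cases b M with ⟨h', _⟩ | ⟨h', _⟩ <;>
    rw [h, h'] <;> linarith

theorem mul_le_abs_of_nonneg_of_le_one {c t : α} (ht₀ : 0 ≤ t) (ht₁ : t ≤ 1) : c * t ≤ |c| :=
  calc c * t ≤ |c| * t := mul_le_mul_of_nonneg_right (le_abs_self c) ht₀
    _ ≤ |c| := mul_le_of_le_one_right (abs_nonneg c) ht₁

end Bounds

theorem exists_isMaxOn_of_dominated {X β : Type*} [TopologicalSpace X] [LinearOrder β]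
    [TopologicalSpace β] [ClosedIciTopology β] {f : X → β} {F K : Set X}
    (hK : IsCompact K) (hF : F.Nonempty) (hKF : K ⊆ F) (hf : ContinuousOn f K)
    (hdom : ∀ p ∈ F, ∃ q ∈ K, f p ≤ f q) : ∃ q ∈ F, IsMaxOn f F q := by
  obtain ⟨p₀, hp₀⟩ := hF
  obtain ⟨q₀, hq₀K, -⟩ := hdom p₀ hp₀
  obtain ⟨q, hqK, hmax⟩ := hK.exists_isMaxOn ⟨q₀, hq₀K⟩ hf
  refine ⟨q, hKF hqK, fun p hp => ?_⟩
  obtain ⟨q', hq'K, hle⟩ := hdom p hp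
  exact hle.trans (hmax hq'K)

/-- Tuples `(x, ρ, τ, π, σ)`, in this order. -/
abbrev Tuple (I J : Type*) : Type _ :=
  (I → J → ℝ) × (I → ℝ) × ℝ × (J → ℝ) × (I → J → ℝ)

variable {I J : Type*} [Fintype I] [Fintype J]
  (d dhat : J → ℝ) (Γ : ℕ) (cov : J → Finset I) (ybar vbar : I → ℝ)

def feasibleSet : Set (Tuple I J) :=
  {p | SubFeasible d dhat Γ cov ybar vbar p.1 p.2.1 p.2.2.1 p.2.2.2.1 p.2.2.2.2}

def tupleCoverage (p : Tuple I J) : ℝ := coverage d Γ p.1 p.2.2.1 p.2.2.2.1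

theorem continuous_tupleCoverage : Continuous (tupleCoverage (I := I) d Γ) := by
  unfold tupleCoverage coverage
  fun_prop

theorem isClosed_feasibleSet : IsClosed (feasibleSet d dhat Γ cov ybar vbar) := by
  simp only [feasibleSet, SubFeasible, Set.ofPred_and, Set.ofPred_forall]
  repeat' first
    | apply IsClosed.inter
    | (apply isClosed_iInter; intro)
    | (apply isClosed_le <;> fun_prop)
    | (apply isClosed_eq <;> fun_prop)

def clamp (M : ℝ) (p : Tuple I J) : Tuple I J :=
  (p.1, fun i => min (p.2.1 i) M, min p.2.2.1 M, fun j => min (p.2.2.2.1 j) M,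
    fun i j => min (p.2.2.2.2 i j) M)

variable {d dhat Γ cov ybar vbar}

theorem le_one_of_mem_feasibleSet {p : Tuple I J} (hp : p ∈ feasibleSet d dhat Γ cov ybar vbar)
    (i : I) (j : J) : p.1 i j ≤ 1 := by
  obtain ⟨hx, -, -, -, -, -, -, -, -, hassign, -⟩ := hp
  exact (Finset.single_le_sum (fun i' _ => hx i' j) (Finset.mem_univ i)).trans (hassign j)

theorem clamp_mem_feasibleSet {M : ℝ} (hM₀ : 0 ≤ M) (hM : ∀ j, |dhat j| ≤ M) {p : Tuple I J}
    (hp : p ∈ feasibleSet d dhat Γ cov ybar vbar) :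
    clamp M p ∈ feasibleSet d dhat Γ cov ybar vbar := by
  have hx₁ := le_one_of_mem_feasibleSet hp
  obtain ⟨hx, hρ, hτ, hπ, hσ, hcov, hcap, hτπ, hσρ, hassign, hopen⟩ := hp
  dsimp only [feasibleSet, clamp]
  refine ⟨hx, fun i => le_min (hρ i) hM₀, le_min hτ hM₀, fun j => le_min (hπ j) hM₀,
    fun i j => le_min (hσ i j) hM₀, hcov, fun i => (?_ : _ ≤ _).trans (hcap i), fun j => ?_,
    fun i j => ?_, hassign, hopen⟩
  · gcongr <;> exact min_le_left _ _
  · refine le_min_add_min hτ (hπ j) hM₀ (hτπ j) ((?_ : _ ≤ |dhat j|).trans (hM j))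
    rw [← Finset.mul_sum]
    exact mul_le_abs_of_nonneg_of_le_one (Finset.sum_nonneg fun i _ => hx i j) (hassign j)
  · refine le_min_add_min (hσ i j) (hρ i) hM₀ (hσρ i j) ((?_ : _ ≤ |dhat j|).trans (hM j))
    exact mul_le_abs_of_nonneg_of_le_one (hx i j) (hx₁ i j)

theorem clamp_mem_inter_Icc {M : ℝ} (hM₀ : 0 ≤ M) (hM : ∀ j, |dhat j| ≤ M) {p : Tuple I J}
    (hp : p ∈ feasibleSet d dhat Γ cov ybar vbar) :
    clamp M p ∈ feasibleSet d dhat Γ cov ybar vbar ∩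
      Set.Icc 0 (fun _ _ => 1, fun _ => M, M, fun _ => M, fun _ _ => M) := by
  have h := clamp_mem_feasibleSet hM₀ hM hp
  exact ⟨h, ⟨h.1, h.2.1, h.2.2.1, h.2.2.2.1, h.2.2.2.2.1⟩,
    ⟨le_one_of_mem_feasibleSet (p := p) hp, fun _ => min_le_right _ _, min_le_right _ _,
      fun _ => min_le_right _ _, fun _ _ => min_le_right _ _⟩⟩

theorem tupleCoverage_le_clamp (M : ℝ) (p : Tuple I J) :
    tupleCoverage d Γ p ≤ tupleCoverage d Γ (clamp M p) := by
  unfold tupleCoverage coverage clamp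
  gcongr <;> exact min_le_left _ _

theorem zero_mem_feasibleSet (hybar : ∀ i, 0 ≤ ybar i) (hvbar : ∀ i, 0 ≤ vbar i) :
    0 ∈ feasibleSet d dhat Γ cov ybar vbar := by
  refine ⟨fun _ _ => le_rfl, fun _ => le_rfl, le_rfl, fun _ => le_rfl, fun _ _ => le_rfl,
    fun _ _ _ => rfl, ?_, ?_, ?_, ?_, ?_⟩ <;> simp [hvbar, hybar]

theorem phi'_eq_of_isMaxOn {p : Tuple I J} (hp : p ∈ feasibleSet d dhat Γ cov ybar vbar)
    (hmax : IsMaxOn (tupleCoverage d Γ) (feasibleSet d dhat Γ cov ybar vbar) p) :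
    phi' d dhat Γ cov ybar vbar = tupleCoverage d Γ p := by
  refine IsGreatest.csSup_eq ⟨⟨_, _, _, _, _, hp, rfl⟩, ?_⟩
  rintro t ⟨x, ρ, τ, π, σ, hfeas, rfl⟩
  exact hmax (show (x, ρ, τ, π, σ) ∈ feasibleSet d dhat Γ cov ybar vbar from hfeas)

end BendersSubproblem

open BendersSubproblem in
theorem benders_subproblem_sup_attained_general {I J : Type*}
    [Fintype I] [Fintype J]
    (d dhat : J → ℝ)
    (Γ : ℕ) (cov : J → Finset I)
    (ybar vbar : I → ℝ) (hybar : ∀ i, 0 ≤ ybar i) (hvbar : ∀ i, 0 ≤ vbar i) :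
    ∃ x ρ τ π σ, SubFeasible d dhat Γ cov ybar vbar x ρ τ π σ ∧
      coverage d Γ x τ π = phi' d dhat Γ cov ybar vbar := by
  set M := ∑ j, |dhat j|
  have hM₀ : 0 ≤ M := Finset.sum_nonneg fun j _ => abs_nonneg (dhat j)
  have hM : ∀ j, |dhat j| ≤ M := fun j =>
    Finset.single_le_sum (fun j _ => abs_nonneg (dhat j)) (Finset.mem_univ j)
  obtain ⟨p, hp, hmax⟩ := exists_isMaxOn_of_dominated
    (isCompact_Icc.inter_left (isClosed_feasibleSet d dhat Γ cov ybar vbar))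
    ⟨0, zero_mem_feasibleSet hybar hvbar⟩ Set.inter_subset_left
    (continuous_tupleCoverage d Γ).continuousOn
    fun p hp => ⟨clamp M p, clamp_mem_inter_Icc hM₀ hM hp, tupleCoverage_le_clamp M p⟩
  exact ⟨_, _, _, _, _, hp, (phi'_eq_of_isMaxOn hp hmax).symm⟩

/-- Attainment of the Benders subproblem supremum: some subproblem-feasible
tuple achieves coverage equal to `φ'(ȳ, v̄)`. -/
theorem benders_subproblem_sup_attained {I J : Type*}
    [Fintype I] [Nonempty I] [Fintype J] [Nonempty J]
    (d dhat : J → ℝ) (hd : ∀ j, 0 ≤ d j) (hdhat : ∀ j, 0 ≤ dhat j)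
    (Γ : ℕ) (cov : J → Finset I)
    (ybar vbar : I → ℝ) (hybar : ∀ i, 0 ≤ ybar i) (hvbar : ∀ i, 0 ≤ vbar i) :
    ∃ x ρ τ π σ, SubFeasible d dhat Γ cov ybar vbar x ρ τ π σ ∧
      coverage d Γ x τ π = phi' d dhat Γ cov ybar vbar :=
  benders_subproblem_sup_attained_general d dhat Γ cov ybar vbar hybar hvbar
end
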